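/- arXiv:1503.01712 — 2 statements merged into one kernel-verified Lean document; each statement's English description precedes it below -/
import Mathlib

section
/- Let d = 4 and define G*(x) = ∫_{B(0,1)} G(x, z) dz for x ∈ ℝ^4. There exists a constant C* ∈ (0,∞) such that for all x, y ∈ ℝ^4 with ‖x − y‖ ≤ 1, one has 1/C* ≤ G*(x)/G*(y) ≤ C*. -/
open MeasureTheory ENNReal

noncomputable section

abbrev EucSp (d : ℕ) : Type := EuclideanSpace ℝ (Fin d)

/-- Real-valued Green function G(x,y) = Γ(d/2−1)/(2π^{d/2}) ‖x−y‖^{2−d}. -/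
def greenFnReal (d : ℕ) (x y : EucSp d) : ℝ :=
  Real.Gamma ((d : ℝ) / 2 - 1) / (2 * Real.pi ^ ((d : ℝ) / 2)) * ‖x - y‖ ^ ((2 : ℝ) - d)

/-- G*(x) = ∫_{B(0,1)} G(x,z) dz on ℝ^4. -/
def Gstar (x : EucSp 4) : ℝ :=
  ∫ z in Metric.ball (0 : EucSp 4) 1, greenFnReal 4 x z

/-!
Up to the factor `1 / (2π²)`, `G*` is the potential `P(x) = ∫_{B(0,1)} ‖x - z‖⁻² dz`, and more
generally, for `0 ≤ s < d`, `∫_{B(0,1)} ‖x - z‖^(-s) dz` is comparable to `(1 + ‖x‖)^(-s)`.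
From below because `‖x - z‖ ≤ 1 + ‖x‖` on the ball. From above, for `‖x‖ > 2` because
`‖x - z‖ ≥ ‖x‖ - 1 ≥ (1 + ‖x‖) / 3`, and for `‖x‖ ≤ 2` because `x - B(0,1) ⊆ B(0,3)` and
`‖w‖^(-s)` is integrable near `0` when `s < d`. When `‖x - y‖ ≤ 1`, `1 + ‖x‖` and `1 + ‖y‖`
differ by a factor at most `2`, which bounds `G*(x) / G*(y)` on both sides.
-/

open Metric Set

lemma Real.rpow_neg_le_mul_rpow_neg_of_le_mul {s c t u : ℝ} (hs : 0 ≤ s) (hc : 0 < c)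
    (hu : 0 < u) (h : u ≤ c * t) : t ^ (-s) ≤ c ^ s * u ^ (-s) := by
  calc t ^ (-s) ≤ (u / c) ^ (-s) :=
        Real.rpow_le_rpow_of_nonpos (by positivity) (by rwa [div_le_iff₀' hc]) (by linarith)
    _ = c ^ s * u ^ (-s) := by
        rw [Real.div_rpow hu.le hc.le, Real.rpow_neg hc.le, div_inv_eq_mul, mul_comm]

section

variable {E : Type*} [SeminormedAddCommGroup E] {s : ℝ}

lemma eqOn_norm_sub_rpow_neg_indicator (x : E) :
    EqOn (fun z => ‖x - z‖ ^ (-s))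
      (fun z => (ball (0 : E) (‖x‖ + 1)).indicator (fun w => ‖w‖ ^ (-s)) (z - x)) (ball 0 1) := by
  intro z hz
  have hzx : z - x ∈ ball (0 : E) (‖x‖ + 1) := by
    rw [mem_ball_zero_iff] at hz ⊢
    linarith [norm_sub_le z x]
  simp only [indicator_of_mem hzx, norm_sub_rev]

lemma div_le_of_comparable (hs : 0 ≤ s) {f : E → ℝ} {a b : ℝ} (ha : 0 < a)
    (hf : ∀ x, a * (1 + ‖x‖) ^ (-s) ≤ f x ∧ f x ≤ b * (1 + ‖x‖) ^ (-s))
    {x y : E} (hxy : ‖x - y‖ ≤ 1) : f x / f y ≤ 2 ^ s * b / a := by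
  have hw : ∀ z : E, 0 < (1 + ‖z‖) ^ (-s) := fun z => by positivity
  have hb : 0 ≤ b := by
    have := (hf x).1.trans (hf x).2
    nlinarith [hw x]
  have hfy : 0 < f y := (mul_pos ha (hw y)).trans_le (hf y).1
  have hweight : (1 + ‖x‖) ^ (-s) ≤ 2 ^ s * (1 + ‖y‖) ^ (-s) :=
    Real.rpow_neg_le_mul_rpow_neg_of_le_mul hs two_pos (by positivity)
      (by linarith [norm_le_norm_add_norm_sub' y x, norm_sub_rev x y, norm_nonneg x])
  rw [div_le_iff₀ hfy]
  calc f x ≤ b * (1 + ‖x‖) ^ (-s) := (hf x).2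
    _ ≤ b * (2 ^ s * (1 + ‖y‖) ^ (-s)) := by gcongr
    _ = 2 ^ s * b / a * (a * (1 + ‖y‖) ^ (-s)) := by field_simp
    _ ≤ 2 ^ s * b / a * f y := by gcongr; exact (hf y).1

lemma exists_div_bounds_of_comparable (hs : 0 ≤ s) {f : E → ℝ} {a b : ℝ} (ha : 0 < a)
    (hf : ∀ x, a * (1 + ‖x‖) ^ (-s) ≤ f x ∧ f x ≤ b * (1 + ‖x‖) ^ (-s)) :
    ∃ C : ℝ, 0 < C ∧ ∀ x y : E, ‖x - y‖ ≤ 1 → 1 / C ≤ f x / f y ∧ f x / f y ≤ C := by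
  have hfpos : ∀ x, 0 < f x := fun x => (mul_pos ha (by positivity)).trans_le (hf x).1
  have hC : 0 < 2 ^ s * b / a := (div_pos (hfpos 0) (hfpos 0)).trans_le
    (div_le_of_comparable hs ha hf (by simp))
  refine ⟨2 ^ s * b / a, hC, fun x y hxy => ⟨?_, div_le_of_comparable hs ha hf hxy⟩⟩
  have hyx := div_le_of_comparable hs ha hf (x := y) (y := x) (by rwa [norm_sub_rev])
  rw [one_div, ← inv_div (f y) (f x)]
  exact inv_anti₀ (div_pos (hfpos y) (hfpos x)) hyx

end

section

variable {E : Type*} [NormedAddCommGroup E] [NormedSpace ℝ E] [FiniteDimensional ℝ E]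
  [MeasurableSpace E] [BorelSpace E] [Nontrivial E] {μ : Measure E} [μ.IsAddHaarMeasure] {s : ℝ}

def unitBallRieszPotential (μ : Measure E) (s : ℝ) (x : E) : ℝ :=
  ∫ z in ball 0 1, ‖x - z‖ ^ (-s) ∂μ

lemma integrable_indicator_ball_norm_rpow_neg (hs : s < Module.finrank ℝ E) (r : ℝ) :
    Integrable ((ball (0 : E) r).indicator fun w => ‖w‖ ^ (-s)) μ := by
  rw [integrable_indicator_iff measurableSet_ball]
  refine integrableOn_ball_of_norm_le_rpow (C := 1) Module.finrank_pos hs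
    (ae_of_all _ fun w => ?_) (measurable_norm.pow_const _).aestronglyMeasurable
  rw [one_mul, Real.norm_of_nonneg (by positivity)]

lemma integrableOn_unitBall_norm_sub_rpow_neg (hs : s < Module.finrank ℝ E) (x : E) :
    IntegrableOn (fun z => ‖x - z‖ ^ (-s)) (ball 0 1) μ :=
  ((integrable_indicator_ball_norm_rpow_neg hs _).comp_sub_right x).integrableOn.congr_fun
    (eqOn_norm_sub_rpow_neg_indicator x).symm measurableSet_ball

lemma unitBallRieszPotential_le_integral_ball (hs : s < Module.finrank ℝ E) (x : E) :
    unitBallRieszPotential μ s x ≤ ∫ w in ball 0 (‖x‖ + 1), ‖w‖ ^ (-s) ∂μ := by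
  set g := (ball (0 : E) (‖x‖ + 1)).indicator fun w => ‖w‖ ^ (-s)
  have hg : Integrable g μ := integrable_indicator_ball_norm_rpow_neg hs _
  calc unitBallRieszPotential μ s x = ∫ z in ball 0 1, g (z - x) ∂μ :=
        setIntegral_congr_fun measurableSet_ball (eqOn_norm_sub_rpow_neg_indicator x)
    _ ≤ ∫ z, g (z - x) ∂μ := setIntegral_le_integral (hg.comp_sub_right x)
        (ae_of_all _ fun z => indicator_nonneg (fun w _ => by positivity) _)
    _ = ∫ w, g w ∂μ := integral_sub_right_eq_self g x
    _ = ∫ w in ball 0 (‖x‖ + 1), ‖w‖ ^ (-s) ∂μ := integral_indicator measurableSet_ball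

lemma unitBallRieszPotential_le_of_one_lt_norm (hs : 0 ≤ s) (hs' : s < Module.finrank ℝ E)
    {x : E} (hx : 1 < ‖x‖) :
    unitBallRieszPotential μ s x ≤ μ.real (ball 0 1) * (‖x‖ - 1) ^ (-s) := by
  rw [← smul_eq_mul, ← setIntegral_const]
  refine setIntegral_mono_on (integrableOn_unitBall_norm_sub_rpow_neg hs' x)
    (integrableOn_const measure_ball_lt_top.ne) measurableSet_ball fun z hz => ?_
  rw [mem_ball_zero_iff] at hz
  exact Real.rpow_le_rpow_of_nonpos (by linarith)
    (by linarith [norm_sub_norm_le x z]) (by linarith)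

lemma measureReal_mul_le_unitBallRieszPotential (hs : 0 ≤ s) (hs' : s < Module.finrank ℝ E)
    (x : E) : μ.real (ball 0 1) * (1 + ‖x‖) ^ (-s) ≤ unitBallRieszPotential μ s x := by
  rw [← smul_eq_mul, ← setIntegral_const]
  refine setIntegral_mono_ae_restrict (integrableOn_const measure_ball_lt_top.ne)
    (integrableOn_unitBall_norm_sub_rpow_neg hs' x) ?_
  -- at `z = x` the kernel takes the junk value `0 ^ (-s) = 0`
  have hne : ∀ᵐ z ∂μ, z ≠ x := measure_eq_zero_iff_ae_notMem.mp (measure_singleton x)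
  filter_upwards [ae_restrict_of_ae hne, ae_restrict_mem measurableSet_ball] with z hzx hz
  rw [mem_ball_zero_iff] at hz
  exact Real.rpow_le_rpow_of_nonpos (norm_pos_iff.mpr (sub_ne_zero.mpr hzx.symm))
    (by linarith [norm_sub_le x z]) (by linarith)

lemma unitBallRieszPotential_comparable (hs : 0 ≤ s) (hs' : s < Module.finrank ℝ E) :
    ∃ a b : ℝ, 0 < a ∧ ∀ x : E, a * (1 + ‖x‖) ^ (-s) ≤ unitBallRieszPotential μ s x ∧
      unitBallRieszPotential μ s x ≤ b * (1 + ‖x‖) ^ (-s) := by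
  set V := μ.real (ball 0 1)
  set K := ∫ w in ball 0 3, ‖w‖ ^ (-s) ∂μ
  have hV : 0 < V := ENNReal.toReal_pos (measure_ball_pos μ 0 one_pos).ne' measure_ball_lt_top.ne
  have hK : 0 ≤ K := setIntegral_nonneg measurableSet_ball fun w _ => by positivity
  refine ⟨V, 3 ^ s * (K + V), hV, fun x =>
    ⟨measureReal_mul_le_unitBallRieszPotential hs hs' x, ?_⟩⟩
  rcases le_or_gt ‖x‖ 2 with hx | hx
  · have hweight : 1 ≤ 3 ^ s * (1 + ‖x‖) ^ (-s) := by
      simpa using Real.rpow_neg_le_mul_rpow_neg_of_le_mul (t := 1) hs three_pos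
        (by positivity) (by linarith)
    calc unitBallRieszPotential μ s x ≤ ∫ w in ball 0 (‖x‖ + 1), ‖w‖ ^ (-s) ∂μ :=
          unitBallRieszPotential_le_integral_ball hs' x
      _ ≤ K := setIntegral_mono_set
          ((integrable_indicator_iff measurableSet_ball).mp
            (integrable_indicator_ball_norm_rpow_neg hs' 3))
          (ae_of_all _ fun w => by positivity)
          (ball_subset_ball (by linarith)).eventuallyLE
      _ ≤ K * (3 ^ s * (1 + ‖x‖) ^ (-s)) := le_mul_of_one_le_right hK hweight
      _ ≤ 3 ^ s * (K + V) * (1 + ‖x‖) ^ (-s) := by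
          rw [← mul_assoc, mul_comm K]
          gcongr
          linarith
  · calc unitBallRieszPotential μ s x ≤ V * (‖x‖ - 1) ^ (-s) :=
          unitBallRieszPotential_le_of_one_lt_norm hs hs' (by linarith)
      _ ≤ V * (3 ^ s * (1 + ‖x‖) ^ (-s)) := by
          gcongr
          exact Real.rpow_neg_le_mul_rpow_neg_of_le_mul hs three_pos (by positivity)
            (by linarith)
      _ ≤ 3 ^ s * (K + V) * (1 + ‖x‖) ^ (-s) := by
          rw [← mul_assoc, mul_comm V]
          gcongr
          linarith

end

lemma greenFnReal_four (x z : EucSp 4) :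
    greenFnReal 4 x z = (2 * Real.pi ^ 2)⁻¹ * ‖x - z‖ ^ (-2 : ℝ) := by
  rw [greenFnReal, show ((4 : ℕ) : ℝ) / 2 = (2 : ℕ) by norm_num, Real.rpow_natCast]
  norm_num

lemma Gstar_eq_mul_unitBallRieszPotential (x : EucSp 4) :
    Gstar x = (2 * Real.pi ^ 2)⁻¹ * unitBallRieszPotential volume 2 x := by
  simp only [Gstar, greenFnReal_four, integral_const_mul, unitBallRieszPotential]

/-- for d = 4 there is a constant C* ∈ (0,∞) such that for all
x, y ∈ ℝ^4 with ‖x − y‖ ≤ 1, 1/C* ≤ G*(x)/G*(y) ≤ C*. -/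
theorem stmt14 :
    ∃ Cstar : ℝ, 0 < Cstar ∧ ∀ x y : EucSp 4, ‖x - y‖ ≤ 1 →
      1 / Cstar ≤ Gstar x / Gstar y ∧ Gstar x / Gstar y ≤ Cstar := by
  obtain ⟨a, b, ha, hab⟩ := unitBallRieszPotential_comparable (μ := (volume : Measure (EucSp 4)))
    zero_le_two (by rw [finrank_euclideanSpace_fin]; norm_num)
  have hc : 0 < (2 * Real.pi ^ 2)⁻¹ := by positivity
  refine exists_div_bounds_of_comparable zero_le_two (mul_pos hc ha)
    (b := (2 * Real.pi ^ 2)⁻¹ * b) fun x => ?_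
  rw [Gstar_eq_mul_unitBallRieszPotential, mul_assoc, mul_assoc]
  exact ⟨mul_le_mul_of_nonneg_left (hab x).1 hc.le, mul_le_mul_of_nonneg_left (hab x).2 hc.le⟩

end
end

section
/- Let d ≥ 2. There exists a constant c = c(d) > 0 such that for every t > 0, every r ∈ (0,1) and every continuous path γ : [0,t] → ℝ^d with γ(0) = 0, the Lebesgue measure of the 2r-neighbourhood of the path satisfies Leb_d( ⋃_{0≤s≤t} B(γ(s), 2r) ) ≥ c · r^{d−1} · sup_{0≤s≤t} ‖γ(s)‖. -/
/-!
Let `M` be the largest distance of the path from its start `γ 0`. Since `s ↦ dist (γ 0) (γ s)` is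
continuous, the intermediate value theorem gives times at which it equals
`0, 2ρ, 4ρ, …, 2ρ⌊M / (2ρ)⌋`. By the triangle inequality the corresponding points are
`2ρ`-separated, so the balls of radius `ρ` around them are disjoint and the `ρ`-neighbourhood of the
path has measure at least `(⌊M / (2ρ)⌋ + 1) μ (ball 0 ρ) ≥ M / (2ρ) · μ (ball 0 ρ)`. For `ρ = 2r`
and Lebesgue measure on `ℝ^d` this is `2^(d-2) ω_d r^(d-1) M`, with `ω_d` the volume of the unit ball.
-/

open MeasureTheory ENNReal

noncomputable section

open Metric Set

section Packing

variable {X : Type*} [PseudoMetricSpace X]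

lemma exists_dist_eq_mul_natCast_of_continuousOn {γ : ℝ → X} {a b : ℝ} (hab : a ≤ b)
    (hγ : ContinuousOn γ (Icc a b)) {δ : ℝ} (hδ : 0 < δ) :
    ∃ σ : ℕ → ℝ, ∀ k ≤ ⌊dist (γ a) (γ b) / δ⌋₊,
      σ k ∈ Icc a b ∧ dist (γ a) (γ (σ k)) = δ * k := by
  have hIVT := intermediate_value_Icc hab
    (((continuous_const (y := γ a)).dist continuous_id).comp_continuousOn hγ)
  have hreach : ∀ k ≤ ⌊dist (γ a) (γ b) / δ⌋₊, ∃ s ∈ Icc a b, dist (γ a) (γ s) = δ * k := by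
    intro k hk
    refine hIVT ⟨by simpa using by positivity, ?_⟩
    rw [← le_div_iff₀' hδ]
    exact (Nat.le_floor_iff (div_nonneg dist_nonneg hδ.le)).mp hk
  choose! σ hσ using hreach
  exact ⟨σ, hσ⟩

variable [MeasurableSpace X] [OpensMeasurableSpace X]

lemma floor_add_one_mul_le_measure_iUnion_ball (μ : Measure X) {γ : ℝ → X} {a b : ℝ}
    (hab : a ≤ b) (hγ : ContinuousOn γ (Icc a b)) {ρ : ℝ} (hρ : 0 < ρ) {m : ℝ≥0∞}
    (hm : ∀ x, m ≤ μ (ball x ρ)) :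
    (⌊dist (γ a) (γ b) / (2 * ρ)⌋₊ + 1 : ℕ) * m ≤ μ (⋃ s ∈ Icc a b, ball (γ s) ρ) := by
  set N := ⌊dist (γ a) (γ b) / (2 * ρ)⌋₊
  obtain ⟨σ, hσ⟩ := exists_dist_eq_mul_natCast_of_continuousOn hab hγ (by positivity : 0 < 2 * ρ)
  have hσ' : ∀ k ∈ Finset.range (N + 1), σ k ∈ Icc a b ∧ dist (γ a) (γ (σ k)) = 2 * ρ * k :=
    fun k hk => hσ k (Finset.mem_range_succ_iff.mp hk)
  have hdisj : (Finset.range (N + 1) : Set ℕ).PairwiseDisjoint (fun k => ball (γ (σ k)) ρ) := by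
    intro j hj k hk hjk
    refine ball_disjoint_ball ?_
    have hjk' : (1 : ℝ) ≤ |(j : ℝ) - k| := by
      have : (j : ℤ) ≠ k := by exact_mod_cast hjk
      exact_mod_cast Int.one_le_abs (sub_ne_zero.mpr this)
    calc ρ + ρ ≤ 2 * ρ * |(j : ℝ) - k| := by nlinarith
      _ = |dist (γ a) (γ (σ j)) - dist (γ a) (γ (σ k))| := by
        rw [(hσ' j hj).2, (hσ' k hk).2, ← mul_sub, abs_mul, abs_of_pos (by positivity : (0 : ℝ) < 2 * ρ)]
      _ ≤ dist (γ (σ j)) (γ (σ k)) := by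
        rw [dist_comm (γ a), dist_comm (γ a)]
        exact abs_dist_sub_le _ _ _
  calc ((N + 1 : ℕ) : ℝ≥0∞) * m
      = ∑ k ∈ Finset.range (N + 1), m := by simp
    _ ≤ ∑ k ∈ Finset.range (N + 1), μ (ball (γ (σ k)) ρ) := Finset.sum_le_sum fun k _ => hm _
    _ = μ (⋃ k ∈ Finset.range (N + 1), ball (γ (σ k)) ρ) :=
      (measure_biUnion_finset hdisj fun _ _ => measurableSet_ball).symm
    _ ≤ μ (⋃ s ∈ Icc a b, ball (γ s) ρ) :=
      measure_mono <| iUnion₂_subset fun k hk =>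
        subset_iUnion₂ (s := fun s _ => ball (γ s) ρ) (σ k) (hσ' k hk).1

end Packing

lemma mul_pow_pred_mul_le_floor_add_one_mul_pow {d : ℕ} (hd : 1 ≤ d) {r M : ℝ} (hr : 0 < r) :
    2 ^ d / 4 * r ^ (d - 1) * M ≤ (⌊M / (2 * (2 * r))⌋₊ + 1 : ℕ) * (2 * r) ^ d := by
  have hfloor : M < 4 * r * (⌊M / (2 * (2 * r))⌋₊ + 1 : ℕ) := by
    rw [← div_lt_iff₀' (by positivity), Nat.cast_add_one, ← mul_assoc]
    norm_num [Nat.lt_floor_add_one]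
  calc 2 ^ d / 4 * r ^ (d - 1) * M
      ≤ 2 ^ d / 4 * r ^ (d - 1) * (4 * r * (⌊M / (2 * (2 * r))⌋₊ + 1 : ℕ)) := by gcongr
    _ = (⌊M / (2 * (2 * r))⌋₊ + 1 : ℕ) * (2 ^ d * (r ^ (d - 1) * r)) := by ring
    _ = (⌊M / (2 * (2 * r))⌋₊ + 1 : ℕ) * (2 * r) ^ d := by
      rw [← pow_succ, Nat.sub_add_cancel hd, mul_pow]

/-- for d ≥ 2 there is c = c(d) > 0 such that for every t > 0,
r ∈ (0,1) and continuous path γ : [0,t] → ℝ^d with γ 0 = 0,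
Leb_d(⋃_{0≤s≤t} B(γ(s), 2r)) ≥ c r^{d−1} sup_{0≤s≤t} ‖γ(s)‖. -/
theorem stmt17 (d : ℕ) (hd : 2 ≤ d) :
    ∃ c : ℝ, 0 < c ∧ ∀ t : ℝ, 0 < t → ∀ r : ℝ, r ∈ Set.Ioo (0 : ℝ) 1 →
      ∀ γ : ℝ → EucSp d, ContinuousOn γ (Set.Icc 0 t) → γ 0 = 0 →
      ENNReal.ofReal (c * r ^ (d - 1) * ⨆ s ∈ Set.Icc (0 : ℝ) t, ‖γ s‖)
        ≤ volume (⋃ s ∈ Set.Icc (0 : ℝ) t, Metric.ball (γ s) (2 * r)) := by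
  set ω := volume (ball (0 : EucSp d) 1)
  have hω : ω ≠ ⊤ := measure_ball_lt_top.ne
  have hω₀ : 0 < ω.toReal := toReal_pos (measure_ball_pos _ _ one_pos).ne' hω
  refine ⟨2 ^ d / 4 * ω.toReal, by positivity, ?_⟩
  rintro t ht r ⟨hr, -⟩ γ hγ hγ0
  obtain ⟨s₀, hs₀, hmax⟩ := isCompact_Icc.exists_isMaxOn (nonempty_Icc.mpr ht.le)
    (continuous_norm.comp_continuousOn hγ)
  have hsup : ⨆ s ∈ Icc (0 : ℝ) t, ‖γ s‖ ≤ dist (γ 0) (γ s₀) := by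
    rw [hγ0, dist_zero_left]
    exact Real.iSup_le (fun s => Real.iSup_le (fun hs => hmax hs) (norm_nonneg _)) (norm_nonneg _)
  have hball : ∀ x : EucSp d, volume (ball x (2 * r)) = ENNReal.ofReal ((2 * r) ^ d) * ω := by
    intro x
    rw [Measure.addHaar_ball_of_pos _ _ (by positivity), finrank_euclideanSpace_fin]
  have hpack := floor_add_one_mul_le_measure_iUnion_ball volume hs₀.1
    (hγ.mono (Icc_subset_Icc_right hs₀.2)) (by positivity : 0 < 2 * r) (fun x => (hball x).ge)
  set N := ⌊dist (γ 0) (γ s₀) / (2 * (2 * r))⌋₊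
  calc ENNReal.ofReal (2 ^ d / 4 * ω.toReal * r ^ (d - 1) * ⨆ s ∈ Icc (0 : ℝ) t, ‖γ s‖)
      ≤ ENNReal.ofReal ((N + 1 : ℕ) * (2 * r) ^ d * ω.toReal) := by
        refine ofReal_le_ofReal ?_
        have key := (mul_le_mul_of_nonneg_left hsup (by positivity)).trans
          (mul_pow_pred_mul_le_floor_add_one_mul_pow (d := d) (by omega) hr)
        nlinarith [mul_le_mul_of_nonneg_right key ω.toReal_nonneg]
    _ = (N + 1 : ℕ) * (ENNReal.ofReal ((2 * r) ^ d) * ω) := by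
        rw [ofReal_mul (by positivity), ofReal_mul (by positivity), ofReal_natCast,
          ofReal_toReal hω, mul_assoc]
    _ ≤ volume (⋃ s ∈ Icc 0 s₀, ball (γ s) (2 * r)) := hpack
    _ ≤ _ := measure_mono (biUnion_subset_biUnion_left (Icc_subset_Icc_right hs₀.2))

end
end
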